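/- arXiv:1709.04287 — 4 statements merged into one kernel-verified Lean document; each statement's English description precedes it below -/
import Mathlib

section
/- Let D ⊆ ℂ be open and connected, let y₁, y₂ be holomorphic on D with y₂ nonvanishing on D, and suppose the Wronskian W := y₁'y₂ − y₁y₂' is a nonzero constant on D. Set f := y₁/y₂ and let u : D → ℝ be defined by u(z) = log( 8|f'(z)|² / (1 + |f(z)|²)² ). Then for every z ∈ D one has |y₁(z)|² + |y₂(z)|² = 2√2·|W|·e^{−u(z)/2}. Consequently, if u is invariant under translations by 1 and τ (wherever defined), then so is |y₁|² + |y₂|², i.e. the monodromy with respect to (y₁, y₂) is unitary. -/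
/-!
For `f = y₁ / y₂` the quotient rule gives `f' = W / y₂²`, so the factor `|y₂|⁴` cancels in
`8|f'|² / (1 + |f|²)²`, which becomes `8|W|² / (|y₁|² + |y₂|²)²`. Solving `u = log` of this
for `|y₁|² + |y₂|²` gives the identity; the right-hand side depends on `z` only through `u`,
so every invariance of `u` passes to `|y₁|² + |y₂|²`.
-/

lemma Real.exp_neg_log_div_two {x : ℝ} (hx : 0 < x) :
    Real.exp (-Real.log x / 2) = (Real.sqrt x)⁻¹ := by
  rw [Real.sqrt_eq_rpow, Real.rpow_def_of_pos hx, neg_div, Real.exp_neg]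
  ring_nf

lemma Real.sqrt_eight_mul_sq_div_sq {w t : ℝ} (hw : 0 ≤ w) (ht : 0 ≤ t) :
    Real.sqrt (8 * w ^ 2 / t ^ 2) = 2 * Real.sqrt 2 * w / t := by
  have h8 : Real.sqrt 8 = 2 * Real.sqrt 2 := by
    rw [show (8 : ℝ) = 2 ^ 2 * 2 by norm_num, Real.sqrt_mul (by positivity),
      Real.sqrt_sq zero_le_two]
  rw [Real.sqrt_div' _ (by positivity), Real.sqrt_mul (by norm_num), Real.sqrt_sq hw,
    Real.sqrt_sq ht, h8]

lemma Real.exp_neg_log_eight_mul_sq_div_sq_div_two {w t : ℝ} (hw : 0 < w) (ht : 0 < t) :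
    Real.exp (-Real.log (8 * w ^ 2 / t ^ 2) / 2) = t / (2 * Real.sqrt 2 * w) := by
  rw [Real.exp_neg_log_div_two (by positivity), Real.sqrt_eight_mul_sq_div_sq hw.le ht.le,
    inv_div]

lemma eight_mul_norm_div_sq_sq_div_one_add_norm_div_sq_sq (a b W : ℂ) (hb : b ≠ 0) :
    8 * ‖W / b ^ 2‖ ^ 2 / (1 + ‖a / b‖ ^ 2) ^ 2 = 8 * ‖W‖ ^ 2 / (‖a‖ ^ 2 + ‖b‖ ^ 2) ^ 2 := by
  have hb' : ‖b‖ ≠ 0 := norm_ne_zero_iff.mpr hb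
  rw [norm_div, norm_div, norm_pow]
  field_simp
  ring

theorem norm_sq_add_norm_sq_eq_of_wronskian {y₁ y₂ : ℂ → ℂ} {z W : ℂ}
    (h₁ : DifferentiableAt ℂ y₁ z) (h₂ : DifferentiableAt ℂ y₂ z) (hz : y₂ z ≠ 0)
    (hW : W ≠ 0) (hWron : deriv y₁ z * y₂ z - y₁ z * deriv y₂ z = W) :
    ‖y₁ z‖ ^ 2 + ‖y₂ z‖ ^ 2 = 2 * Real.sqrt 2 * ‖W‖ * Real.exp (-Real.log
      (8 * ‖deriv (fun z => y₁ z / y₂ z) z‖ ^ 2 / (1 + ‖y₁ z / y₂ z‖ ^ 2) ^ 2) / 2) := by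
  have hpos : 0 < ‖y₁ z‖ ^ 2 + ‖y₂ z‖ ^ 2 := by positivity
  rw [deriv_fun_div h₁ h₂ hz, hWron,
    eight_mul_norm_div_sq_sq_div_one_add_norm_div_sq_sq _ _ _ hz,
    Real.exp_neg_log_eight_mul_sq_div_sq_div_two (norm_pos_iff.mpr hW) hpos]
  field_simp

theorem developing_map_unitary_general
    (D : Set ℂ) (hD : IsOpen D)
    (y₁ y₂ : ℂ → ℂ) (hy₁ : DifferentiableOn ℂ y₁ D) (hy₂ : DifferentiableOn ℂ y₂ D)
    (hy₂0 : ∀ z ∈ D, y₂ z ≠ 0)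
    (W : ℂ) (hW : W ≠ 0)
    (hWron : ∀ z ∈ D, deriv y₁ z * y₂ z - y₁ z * deriv y₂ z = W)
    (f : ℂ → ℂ) (hf : f = fun z => y₁ z / y₂ z)
    (u : ℂ → ℝ)
    (hu : ∀ z ∈ D, u z =
      Real.log (8 * ‖deriv f z‖ ^ 2 / (1 + ‖f z‖ ^ 2) ^ 2)) :
    (∀ z ∈ D,
      ‖y₁ z‖ ^ 2 + ‖y₂ z‖ ^ 2 =
        2 * Real.sqrt 2 * ‖W‖ * Real.exp (-(u z) / 2)) ∧
    (∀ c : ℂ, ∀ z ∈ D, z + c ∈ D → u (z + c) = u z →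
      ‖y₁ (z + c)‖ ^ 2 + ‖y₂ (z + c)‖ ^ 2 =
        ‖y₁ z‖ ^ 2 + ‖y₂ z‖ ^ 2) := by
  subst hf
  have key : ∀ z ∈ D,
      ‖y₁ z‖ ^ 2 + ‖y₂ z‖ ^ 2 = 2 * Real.sqrt 2 * ‖W‖ * Real.exp (-(u z) / 2) := by
    intro z hz
    rw [hu z hz]
    exact norm_sq_add_norm_sq_eq_of_wronskian (hy₁.differentiableAt (hD.mem_nhds hz))
      (hy₂.differentiableAt (hD.mem_nhds hz)) (hy₂0 z hz) hW (hWron z hz)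
  refine ⟨key, fun c z hz hzc huc => ?_⟩
  rw [key _ hzc, key _ hz, huc]

/-- **Unitarity identity for developing maps.** If `y₁, y₂` are holomorphic on an
open connected set `D`, `y₂` nonvanishing, with constant nonzero Wronskian `W`,
`f = y₁/y₂`, and `u = log(8|f'|²/(1+|f|²)²)`, then
`|y₁|² + |y₂|² = 2√2 |W| e^{-u/2}` on `D`; consequently any translation
invariance of `u` transfers to `|y₁|² + |y₂|²`. -/
theorem developing_map_unitary
    (D : Set ℂ) (hD : IsOpen D) (hDc : IsConnected D)
    (y₁ y₂ : ℂ → ℂ) (hy₁ : DifferentiableOn ℂ y₁ D) (hy₂ : DifferentiableOn ℂ y₂ D)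
    (hy₂0 : ∀ z ∈ D, y₂ z ≠ 0)
    (W : ℂ) (hW : W ≠ 0)
    (hWron : ∀ z ∈ D, deriv y₁ z * y₂ z - y₁ z * deriv y₂ z = W)
    (f : ℂ → ℂ) (hf : f = fun z => y₁ z / y₂ z)
    (u : ℂ → ℝ)
    (hu : ∀ z ∈ D, u z =
      Real.log (8 * ‖deriv f z‖ ^ 2 / (1 + ‖f z‖ ^ 2) ^ 2)) :
    (∀ z ∈ D,
      ‖y₁ z‖ ^ 2 + ‖y₂ z‖ ^ 2 =
        2 * Real.sqrt 2 * ‖W‖ * Real.exp (-(u z) / 2)) ∧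
    (∀ c : ℂ, ∀ z ∈ D, z + c ∈ D → u (z + c) = u z →
      ‖y₁ (z + c)‖ ^ 2 + ‖y₂ (z + c)‖ ^ 2 =
        ‖y₁ z‖ ^ 2 + ‖y₂ z‖ ^ 2) :=
  developing_map_unitary_general D hD y₁ y₂ hy₁ hy₂ hy₂0 W hW hWron f hf u hu
end

section
/- Let D ⊆ ℂ be open and let u : D → ℝ be a smooth function satisfying Δu + e^u = 0 on D. Then the function g := u_{zz} − (1/2)·(u_z)² is holomorphic on D, where u_z = (1/2)(∂u/∂x − i·∂u/∂y) and u_{zz} = (u_z)_z. -/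
open Complex

theorem contDiffOn_fderiv_apply {f : ℂ → ℝ} {D : Set ℂ} (hD : IsOpen D)
    (hf : ContDiffOn ℝ (⊤ : ℕ∞) f D) (v : ℂ) :
    ContDiffOn ℝ (⊤ : ℕ∞) (fun z => fderiv ℝ f z v) D :=
  (hf.fderiv_of_isOpen hD (by simp)).clm_apply contDiffOn_const

theorem diffAt_of_contDiffOn {f : ℂ → ℝ} {D : Set ℂ} (hD : IsOpen D)
    (hf : ContDiffOn ℝ (⊤ : ℕ∞) f D) {z : ℂ} (hz : z ∈ D) : DifferentiableAt ℝ f z :=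
  (hf.contDiffAt (hD.mem_nhds hz)).differentiableAt (by simp)

theorem symm_mixed {f : ℂ → ℝ} {D : Set ℂ} (hD : IsOpen D) (hf : ContDiffOn ℝ (⊤ : ℕ∞) f D)
    {z : ℂ} (hz : z ∈ D) (v w : ℂ) :
    fderiv ℝ (fun t => fderiv ℝ f t v) z w = fderiv ℝ (fun t => fderiv ℝ f t w) z v := by
  have hdf : DifferentiableAt ℝ (fderiv ℝ f) z :=
    (((hf.fderiv_of_isOpen hD (by simp))).contDiffAt (hD.mem_nhds hz)).differentiableAt (by simp : ((⊤ : ℕ∞) : WithTop ℕ∞) ≠ 0)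
  have e1 : ∀ v : ℂ, fderiv ℝ (fun t => fderiv ℝ f t v) z
      = (ContinuousLinearMap.apply ℝ ℝ v).comp (fderiv ℝ (fderiv ℝ f) z) := fun v =>
    (((ContinuousLinearMap.apply ℝ ℝ v).hasFDerivAt).comp z hdf.hasFDerivAt).fderiv
  have hs : IsSymmSndFDerivAt ℝ f z :=
    (hf.contDiffAt (hD.mem_nhds hz)).isSymmSndFDerivAt (by simp; rw [← WithTop.coe_ofNat]; exact WithTop.coe_le_coe.mpr le_top)
  rw [e1, e1]
  simpa using hs w v

theorem hasFDerivAt_comb (c : ℂ) {p q : ℂ → ℝ} {P Q : ℂ →L[ℝ] ℝ} {z : ℂ}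
    (hp : HasFDerivAt p P z) (hq : HasFDerivAt q Q z) :
    HasFDerivAt (fun w => c * ((p w : ℂ) - Complex.I * (q w : ℂ)))
      (c • ((Complex.ofRealCLM.comp P) - Complex.I • (Complex.ofRealCLM.comp Q))) z := by
  have hp' : HasFDerivAt (fun w => ((p w : ℝ) : ℂ)) (Complex.ofRealCLM.comp P) z :=
    (Complex.ofRealCLM.hasFDerivAt).comp z hp
  have hq' : HasFDerivAt (fun w => ((q w : ℝ) : ℂ)) (Complex.ofRealCLM.comp Q) z :=
    (Complex.ofRealCLM.hasFDerivAt).comp z hq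
  exact (hp'.sub (hq'.const_mul Complex.I)).const_mul c

theorem differentiableAt_of_cr {f : ℂ → ℂ} {z : ℂ} (hf : DifferentiableAt ℝ f z)
    (h : fderiv ℝ f z Complex.I = Complex.I * fderiv ℝ f z 1) :
    DifferentiableAt ℂ f z := by
  set L := fderiv ℝ f z with hLdef
  refine HasFDerivAt.differentiableAt
    (f' := (L 1) • (ContinuousLinearMap.id ℂ ℂ)) ?_
  refine hasFDerivAt_of_restrictScalars ℝ hf.hasFDerivAt ?_
  ext w
  show L 1 * w = L w
  have hw : w = w.re • (1:ℂ) + w.im • Complex.I := by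
    simp [Complex.real_smul, Complex.re_add_im]
  rw [show L w = w.re • L 1 + w.im • L Complex.I by rw [← map_smul, ← map_smul, ← map_add, ← hw],
    h]
  nth_rewrite 1 [hw]
  simp only [Complex.real_smul, smul_eq_mul]
  ring

/-- The Euclidean Laplacian of `u : ℂ → ℝ`, via second directional derivatives
in the directions `1` and `I`. -/
noncomputable def laplacian (u : ℂ → ℝ) (z : ℂ) : ℝ :=
  fderiv ℝ (fun w => fderiv ℝ u w 1) z 1 +
    fderiv ℝ (fun w => fderiv ℝ u w Complex.I) z Complex.I

/-- The Wirtinger derivative `∂_z` of a real-valued function: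
`u_z = (1/2)(∂u/∂x - i ∂u/∂y)`. -/
noncomputable def wirtR (u : ℂ → ℝ) (z : ℂ) : ℂ :=
  (1 / 2) * ((fderiv ℝ u z 1 : ℝ) - Complex.I * (fderiv ℝ u z Complex.I : ℝ))

/-- The Wirtinger derivative `∂_z` of a complex-valued function. -/
noncomputable def wirtC (g : ℂ → ℂ) (z : ℂ) : ℂ :=
  (1 / 2) * (fderiv ℝ g z 1 - Complex.I * fderiv ℝ g z Complex.I)

/-- **Holomorphy of `u_{zz} - u_z²/2` for Liouville's equation.** If `u` is
smooth on an open set `D ⊆ ℂ` and satisfies `Δu + e^u = 0` there, then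
`u_{zz} - (1/2) u_z²` is holomorphic on `D`. -/
theorem schwarzian_quantity_holomorphic
    (D : Set ℂ) (hD : IsOpen D) (u : ℂ → ℝ)
    (hu : ContDiffOn ℝ (⊤ : ℕ∞) u D)
    (heq : ∀ z ∈ D, laplacian u z + Real.exp (u z) = 0) :
    DifferentiableOn ℂ (fun z => wirtC (wirtR u) z - (1 / 2) * (wirtR u z) ^ 2) D := by
  intro z hz
  have hA : ContDiffOn ℝ (⊤ : ℕ∞) (fun t => fderiv ℝ u t 1) D := contDiffOn_fderiv_apply hD hu 1
  have hB : ContDiffOn ℝ (⊤ : ℕ∞) (fun t => fderiv ℝ u t Complex.I) D := contDiffOn_fderiv_apply hD hu Complex.I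
  have hAX : ContDiffOn ℝ (⊤ : ℕ∞) (fun r => fderiv ℝ (fun t => fderiv ℝ u t 1) r 1) D := contDiffOn_fderiv_apply hD hA 1
  have hAY : ContDiffOn ℝ (⊤ : ℕ∞) (fun r => fderiv ℝ (fun t => fderiv ℝ u t 1) r Complex.I) D := contDiffOn_fderiv_apply hD hA Complex.I
  have hBX : ContDiffOn ℝ (⊤ : ℕ∞) (fun r => fderiv ℝ (fun t => fderiv ℝ u t Complex.I) r 1) D := contDiffOn_fderiv_apply hD hB 1
  have hBY : ContDiffOn ℝ (⊤ : ℕ∞) (fun r => fderiv ℝ (fun t => fderiv ℝ u t Complex.I) r Complex.I) D := contDiffOn_fderiv_apply hD hB Complex.I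
  have hg1At : ∀ t ∈ D, HasFDerivAt (wirtR u)
      ((1/2 : ℂ) • (Complex.ofRealCLM.comp (fderiv ℝ (fun t => fderiv ℝ u t 1) t) -
        Complex.I • Complex.ofRealCLM.comp (fderiv ℝ (fun t => fderiv ℝ u t Complex.I) t))) t := by
    intro t ht
    exact hasFDerivAt_comb (1/2 : ℂ)
      ((diffAt_of_contDiffOn hD hA ht).hasFDerivAt)
      ((diffAt_of_contDiffOn hD hB ht).hasFDerivAt)
  have heqG : ∀ t ∈ D, wirtC (wirtR u) t - (1 / 2) * (wirtR u t) ^ 2 = (fun t => (1/4 : ℂ) * (((fderiv ℝ (fun t => fderiv ℝ u t 1) t 1 - fderiv ℝ (fun t => fderiv ℝ u t Complex.I) t Complex.I : ℝ) : ℂ) - Complex.I * ((fderiv ℝ (fun t => fderiv ℝ u t Complex.I) t 1 + fderiv ℝ (fun t => fderiv ℝ u t 1) t Complex.I : ℝ) : ℂ)) - (1/2 : ℂ) * (wirtR u t * wirtR u t)) t := by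
    intro t ht
    have h1 := (hg1At t ht).fderiv
    simp only [wirtC, h1, ContinuousLinearMap.smul_apply, ContinuousLinearMap.sub_apply,
      ContinuousLinearMap.comp_apply, Complex.ofRealCLM_apply, smul_eq_mul]
    push_cast
    linear_combination (((fderiv ℝ (fun t => fderiv ℝ u t Complex.I) t Complex.I : ℝ) : ℂ) / 4) * Complex.I_sq
  have dAXz : DifferentiableAt ℝ (fun r => fderiv ℝ (fun t => fderiv ℝ u t 1) r 1) z := diffAt_of_contDiffOn hD hAX hz
  have dAYz : DifferentiableAt ℝ (fun r => fderiv ℝ (fun t => fderiv ℝ u t 1) r Complex.I) z := diffAt_of_contDiffOn hD hAY hz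
  have dBXz : DifferentiableAt ℝ (fun r => fderiv ℝ (fun t => fderiv ℝ u t Complex.I) r 1) z := diffAt_of_contDiffOn hD hBX hz
  have dBYz : DifferentiableAt ℝ (fun r => fderiv ℝ (fun t => fderiv ℝ u t Complex.I) r Complex.I) z := diffAt_of_contDiffOn hD hBY hz
  have hpf : HasFDerivAt (fun t => fderiv ℝ (fun t => fderiv ℝ u t 1) t 1 - fderiv ℝ (fun t => fderiv ℝ u t Complex.I) t Complex.I)
      ((fderiv ℝ (fun r => fderiv ℝ (fun t => fderiv ℝ u t 1) r 1) z) - (fderiv ℝ (fun r => fderiv ℝ (fun t => fderiv ℝ u t Complex.I) r Complex.I) z)) z := dAXz.hasFDerivAt.sub dBYz.hasFDerivAt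
  have hqf : HasFDerivAt (fun t => fderiv ℝ (fun t => fderiv ℝ u t Complex.I) t 1 + fderiv ℝ (fun t => fderiv ℝ u t 1) t Complex.I)
      ((fderiv ℝ (fun r => fderiv ℝ (fun t => fderiv ℝ u t Complex.I) r 1) z) + (fderiv ℝ (fun r => fderiv ℝ (fun t => fderiv ℝ u t 1) r Complex.I) z)) z := dBXz.hasFDerivAt.add dAYz.hasFDerivAt
  have hg1 : HasFDerivAt (wirtR u) ((1/2 : ℂ) • (Complex.ofRealCLM.comp (fderiv ℝ (fun t => fderiv ℝ u t 1) z) - Complex.I • Complex.ofRealCLM.comp (fderiv ℝ (fun t => fderiv ℝ u t Complex.I) z))) z := hg1At z hz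
  have hG : HasFDerivAt (fun t => (1/4 : ℂ) * (((fderiv ℝ (fun t => fderiv ℝ u t 1) t 1 - fderiv ℝ (fun t => fderiv ℝ u t Complex.I) t Complex.I : ℝ) : ℂ) - Complex.I * ((fderiv ℝ (fun t => fderiv ℝ u t Complex.I) t 1 + fderiv ℝ (fun t => fderiv ℝ u t 1) t Complex.I : ℝ) : ℂ)) - (1/2 : ℂ) * (wirtR u t * wirtR u t)) (((1/4 : ℂ) • (Complex.ofRealCLM.comp ((fderiv ℝ (fun r => fderiv ℝ (fun t => fderiv ℝ u t 1) r 1) z) - (fderiv ℝ (fun r => fderiv ℝ (fun t => fderiv ℝ u t Complex.I) r Complex.I) z)) - Complex.I • Complex.ofRealCLM.comp ((fderiv ℝ (fun r => fderiv ℝ (fun t => fderiv ℝ u t Complex.I) r 1) z) + (fderiv ℝ (fun r => fderiv ℝ (fun t => fderiv ℝ u t 1) r Complex.I) z)))) - ((1/2 : ℂ) • (wirtR u z • ((1/2 : ℂ) • (Complex.ofRealCLM.comp (fderiv ℝ (fun t => fderiv ℝ u t 1) z) - Complex.I • Complex.ofRealCLM.comp (fderiv ℝ (fun t => fderiv ℝ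 u t Complex.I) z))) + wirtR u z • ((1/2 : ℂ) • (Complex.ofRealCLM.comp (fderiv ℝ (fun t => fderiv ℝ u t 1) z) - Complex.I • Complex.ofRealCLM.comp (fderiv ℝ (fun t => fderiv ℝ u t Complex.I) z)))))) z :=
    (hasFDerivAt_comb (1/4 : ℂ) hpf hqf).sub ((hg1.mul hg1).const_mul (1/2 : ℂ))
  have E1 : fderiv ℝ (fun r => fderiv ℝ (fun t => fderiv ℝ u t 1) r Complex.I) z 1 = fderiv ℝ (fun r => fderiv ℝ (fun t => fderiv ℝ u t 1) r 1) z Complex.I :=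
    symm_mixed hD hA hz Complex.I 1
  have E2 : fderiv ℝ (fun r => fderiv ℝ (fun t => fderiv ℝ u t Complex.I) r Complex.I) z 1 = fderiv ℝ (fun r => fderiv ℝ (fun t => fderiv ℝ u t Complex.I) r 1) z Complex.I :=
    symm_mixed hD hB hz Complex.I 1
  have hABev : (fun r => fderiv ℝ (fun t => fderiv ℝ u t Complex.I) r 1) =ᶠ[nhds z] (fun r => fderiv ℝ (fun t => fderiv ℝ u t 1) r Complex.I) := by
    filter_upwards [hD.mem_nhds hz] with t ht using symm_mixed hD hu ht Complex.I 1
  have E34 : fderiv ℝ (fun r => fderiv ℝ (fun t => fderiv ℝ u t Complex.I) r 1) z = fderiv ℝ (fun r => fderiv ℝ (fun t => fderiv ℝ u t 1) r Complex.I) z := hABev.fderiv_eq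
  have E3 : fderiv ℝ (fun r => fderiv ℝ (fun t => fderiv ℝ u t Complex.I) r 1) z 1 = fderiv ℝ (fun r => fderiv ℝ (fun t => fderiv ℝ u t 1) r Complex.I) z 1 := by rw [E34]
  have E4 : fderiv ℝ (fun r => fderiv ℝ (fun t => fderiv ℝ u t Complex.I) r 1) z Complex.I = fderiv ℝ (fun r => fderiv ℝ (fun t => fderiv ℝ u t 1) r Complex.I) z Complex.I := by rw [E34]
  have E8 : fderiv ℝ (fun t => fderiv ℝ u t Complex.I) z 1 = fderiv ℝ (fun t => fderiv ℝ u t 1) z Complex.I :=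
    symm_mixed hD hu hz Complex.I 1
  have hLiou : ∀ t ∈ D, fderiv ℝ (fun t => fderiv ℝ u t 1) t 1 + fderiv ℝ (fun t => fderiv ℝ u t Complex.I) t Complex.I = -Real.exp (u t) := by
    intro t ht
    have h := heq t ht
    rw [laplacian] at h
    linarith
  have hLev : (fun t => fderiv ℝ (fun t => fderiv ℝ u t 1) t 1 + fderiv ℝ (fun t => fderiv ℝ u t Complex.I) t Complex.I)
      =ᶠ[nhds z] (fun t => -Real.exp (u t)) := by
    filter_upwards [hD.mem_nhds hz] with t ht using hLiou t ht
  have hexp : HasFDerivAt (fun t => -Real.exp (u t))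
      (-(Real.exp (u z) • fderiv ℝ u z)) z :=
    ((diffAt_of_contDiffOn hD hu hz).hasFDerivAt.exp).neg
  have hLfd' : (fderiv ℝ (fun r => fderiv ℝ (fun t => fderiv ℝ u t 1) r 1) z) + (fderiv ℝ (fun r => fderiv ℝ (fun t => fderiv ℝ u t Complex.I) r Complex.I) z) = -(Real.exp (u z) • fderiv ℝ u z) := by
    rw [← hexp.fderiv, ← hLev.fderiv_eq]
    exact (dAXz.hasFDerivAt.add dBYz.hasFDerivAt).fderiv.symm
  have E5 : fderiv ℝ (fun r => fderiv ℝ (fun t => fderiv ℝ u t 1) r 1) z 1 + fderiv ℝ (fun r => fderiv ℝ (fun t => fderiv ℝ u t Complex.I) r Complex.I) z 1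
      = -(Real.exp (u z) * fderiv ℝ u z 1) := by
    have h := congrArg (fun (L : ℂ →L[ℝ] ℝ) => L 1) hLfd'
    simpa using h
  have E6 : fderiv ℝ (fun r => fderiv ℝ (fun t => fderiv ℝ u t 1) r 1) z Complex.I + fderiv ℝ (fun r => fderiv ℝ (fun t => fderiv ℝ u t Complex.I) r Complex.I) z Complex.I
      = -(Real.exp (u z) * fderiv ℝ u z Complex.I) := by
    have h := congrArg (fun (L : ℂ →L[ℝ] ℝ) => L Complex.I) hLfd'
    simpa using h
  have E7 : fderiv ℝ (fun t => fderiv ℝ u t 1) z 1 + fderiv ℝ (fun t => fderiv ℝ u t Complex.I) z Complex.I = -Real.exp (u z) := hLiou z hz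
  have hcr : fderiv ℝ (fun t => (1/4 : ℂ) * (((fderiv ℝ (fun t => fderiv ℝ u t 1) t 1 - fderiv ℝ (fun t => fderiv ℝ u t Complex.I) t Complex.I : ℝ) : ℂ) - Complex.I * ((fderiv ℝ (fun t => fderiv ℝ u t Complex.I) t 1 + fderiv ℝ (fun t => fderiv ℝ u t 1) t Complex.I : ℝ) : ℂ)) - (1/2 : ℂ) * (wirtR u t * wirtR u t)) z Complex.I = Complex.I * fderiv ℝ (fun t => (1/4 : ℂ) * (((fderiv ℝ (fun t => fderiv ℝ u t 1) t 1 - fderiv ℝ (fun t => fderiv ℝ u t Complex.I) t Complex.I : ℝ) : ℂ) - Complex.I * ((fderiv ℝ (fun t => fderiv ℝ u t Complex.I) t 1 + fderiv ℝ (fun t => fderiv ℝ u t 1) t Complex.I : ℝ) : ℂ)) - (1/2 : ℂ) * (wirtR u t * wirtR u t)) z 1 := by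
    rw [hG.fderiv]
    simp only [ContinuousLinearMap.sub_apply, ContinuousLinearMap.add_apply,
      ContinuousLinearMap.smul_apply, ContinuousLinearMap.comp_apply,
      Complex.ofRealCLM_apply, smul_eq_mul, wirtR]
    have C1 := congrArg (fun r : ℝ => (r : ℂ)) E1
    have C2 := congrArg (fun r : ℝ => (r : ℂ)) E2
    have C3 := congrArg (fun r : ℝ => (r : ℂ)) E3
    have C4 := congrArg (fun r : ℝ => (r : ℂ)) E4
    have C5 := congrArg (fun r : ℝ => (r : ℂ)) E5
    have C6 := congrArg (fun r : ℝ => (r : ℂ)) E6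
    have C7 := congrArg (fun r : ℝ => (r : ℂ)) E7
    have C8 := congrArg (fun r : ℝ => (r : ℂ)) E8
    push_cast at C1 C2 C3 C4 C5 C6 C7 C8 ⊢
    set c : ℂ := (1/2 : ℂ) * ((((fderiv ℝ u z 1 : ℝ) : ℂ)) - Complex.I * (((fderiv ℝ u z Complex.I : ℝ) : ℂ))) with hc
    linear_combination (-1/2 : ℂ) * C1 + (Complex.I/2) * C2 + (-1/4 : ℂ) * C3 +
      (Complex.I/4) * C4 + (-Complex.I/4) * C5 + (-1/4 : ℂ) * C6 +
      (Complex.I * c / 2) * C7 + (c / 2) * C8 + ((1/4 : ℂ) * (((fderiv ℝ (fun r => fderiv ℝ (fun t => fderiv ℝ u t Complex.I) r 1) z 1 : ℝ) : ℂ) + ((fderiv ℝ (fun r => fderiv ℝ (fun t => fderiv ℝ u t 1) r Complex.I) z 1 : ℝ) : ℂ) - ((fderiv ℝ (fun t => fderiv ℝ u t Complex.I) z 1 : ℝ) : ℂ) * ((fderiv ℝ u z 1 : ℝ) : ℂ) + Complex.I * ((fderiv ℝ (fun t => fderiv ℝ u t Complex.I) z 1 : ℝ) : ℂ) * ((fderiv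 ℝ u z Complex.I : ℝ) : ℂ) + ((fderiv ℝ u z Complex.I : ℝ) : ℂ) * (Complex.exp ((u z : ℝ) : ℂ)))) * Complex.I_sq
  have hGdiff : DifferentiableAt ℂ (fun t => (1/4 : ℂ) * (((fderiv ℝ (fun t => fderiv ℝ u t 1) t 1 - fderiv ℝ (fun t => fderiv ℝ u t Complex.I) t Complex.I : ℝ) : ℂ) - Complex.I * ((fderiv ℝ (fun t => fderiv ℝ u t Complex.I) t 1 + fderiv ℝ (fun t => fderiv ℝ u t 1) t Complex.I : ℝ) : ℂ)) - (1/2 : ℂ) * (wirtR u t * wirtR u t)) z := differentiableAt_of_cr hG.differentiableAt hcr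
  have hev : (fun t => wirtC (wirtR u) t - (1 / 2) * (wirtR u t) ^ 2) =ᶠ[nhds z] (fun t => (1/4 : ℂ) * (((fderiv ℝ (fun t => fderiv ℝ u t 1) t 1 - fderiv ℝ (fun t => fderiv ℝ u t Complex.I) t Complex.I : ℝ) : ℂ) - Complex.I * ((fderiv ℝ (fun t => fderiv ℝ u t Complex.I) t 1 + fderiv ℝ (fun t => fderiv ℝ u t 1) t Complex.I : ℝ) : ℂ)) - (1/2 : ℂ) * (wirtR u t * wirtR u t)) := by
    filter_upwards [hD.mem_nhds hz] with t ht using heqG t ht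
  exact (hGdiff.congr_of_eventuallyEq hev).differentiableWithinAt
end

section
/- Let t₁, t₂, t₃ ∈ ℂ be pairwise distinct, γ₁, γ₂, γ₃ ∈ ℂ with γ₃ not a nonpositive integer, α = −N with N ∈ ℤ_{≥0}, and β = γ₁ + γ₂ + γ₃ − 1 − α. Define the sequence (c_m)_{m ≥ 0} of polynomials in q by c₀ = 1, (t₁−t₃)(t₂−t₃)γ₃·c₁ = q·c₀, and for m ≥ 1, (t₁−t₃)(t₂−t₃)(m+1)(m+γ₃)·c_{m+1} = −(m−1+α)(m−1+β)·c_{m−1} + [ m·( (m−1+γ₃)(t₁+t₂−2t₃) + (t₂−t₃)γ₁ + (t₁−t₃)γ₂ ) + q ]·c_m. If q₀ ∈ ℂ satisfies c_{N+1}(q₀) = 0, then the polynomial p(x) := Σ_{m=0}^{N} c_m(q₀)·(x − t₃)^m is a nonzero polynomial of degree at most N satisfying the Heun equation, in the form of the polynomial identity ∏_{j=1}^{3}(x − t_j)·p''(x) + [ γ₁(x−t₂)(x−t₃) + γ₂(x−t₁)(x−t₃) + γ₃(x−t₁)(x−t₂) ]·p'(x) + ( αβ(x − t₃) − q₀ )·p(x)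 = 0. -/
open Polynomial

/-- Telescoping sum lemma for the Heun recursion: the partial sums of the
three-term combinations collapse to boundary terms. -/
private lemma heun_sum_aux (t₃ : ℂ) (F A B D : ℕ → ℂ)
    (hD0 : D 0 = 0)
    (hrel0 : B 0 * F 0 + D 1 * F 1 = 0)
    (hrel : ∀ m : ℕ, A m * F m + B (m + 1) * F (m + 1) + D (m + 2) * F (m + 2) = 0) :
    ∀ n : ℕ, ∑ m ∈ Finset.range (n + 1),
        (C (F m) * C (A m) * (X - C t₃) ^ (m + 1) + C (F m) * C (B m) * (X - C t₃) ^ m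
          + C (F m) * C (D m) * (X - C t₃) ^ (m - 1))
      = C (F n) * C (A n) * (X - C t₃) ^ (n + 1)
          - C (F (n + 1)) * C (D (n + 1)) * (X - C t₃) ^ n := by
  intro n
  induction n with
  | zero =>
      simp only [zero_add, Finset.sum_range_one, pow_zero, pow_one, Nat.zero_sub]
      have e0 : (C (D 0) : ℂ[X]) = 0 := by rw [hD0, map_zero]
      have e1 : (C (B 0) : ℂ[X]) * C (F 0) + C (D 1) * C (F 1) = 0 := by
        rw [← map_mul, ← map_mul, ← map_add, hrel0, map_zero]
      linear_combination e1 + C (F 0) * e0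
  | succ n ih =>
      rw [Finset.sum_range_succ, ih, Nat.add_sub_cancel]
      have e3 : (C (A n) : ℂ[X]) * C (F n) + C (B (n + 1)) * C (F (n + 1))
          + C (D (n + 2)) * C (F (n + 2)) = 0 := by
        rw [← map_mul, ← map_mul, ← map_mul, ← map_add, ← map_add, hrel n, map_zero]
      linear_combination (X - C t₃) ^ (n + 1) * e3

/-- **Polynomial solutions of the Heun equation.** Let `(c_m)` be the sequence of
polynomials in the accessory parameter `q` produced by the Heun recursion with
data `t₁, t₂, t₃, γ₁, γ₂, γ₃, α = -N, β`. If `q₀` is a root of `c_{N+1}`, then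
`p(x) = ∑_{m=0}^{N} c_m(q₀)(x - t₃)^m` is a nonzero polynomial of degree at most
`N` solving the Heun equation (as a polynomial identity). -/
theorem heun_polynomial_solution
    (t₁ t₂ t₃ γ₁ γ₂ γ₃ α β : ℂ) (N : ℕ)
    (ht12 : t₁ ≠ t₂) (ht23 : t₂ ≠ t₃) (ht13 : t₁ ≠ t₃)
    (hγ₃ : ∀ k : ℕ, γ₃ ≠ -(k : ℂ))
    (hα : α = -(N : ℂ)) (hβ : β = γ₁ + γ₂ + γ₃ - 1 - α)
    (c : ℕ → Polynomial ℂ)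
    (hc0 : c 0 = 1)
    (hc1 : C ((t₁ - t₃) * (t₂ - t₃) * γ₃) * c 1 = X)
    (hrec : ∀ m : ℕ,
      C ((t₁ - t₃) * (t₂ - t₃) * ((m : ℂ) + 2) * ((m : ℂ) + 1 + γ₃)) * c (m + 2) =
        C (-(((m : ℂ) + α) * ((m : ℂ) + β))) * c m +
        (C (((m : ℂ) + 1) * (((m : ℂ) + γ₃) * (t₁ + t₂ - 2 * t₃) +
            (t₂ - t₃) * γ₁ + (t₁ - t₃) * γ₂)) + X) * c (m + 1))
    (q₀ : ℂ) (hq₀ : (c (N + 1)).eval q₀ = 0)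
    (p : Polynomial ℂ)
    (hp : p = ∑ m ∈ Finset.range (N + 1), C ((c m).eval q₀) * (X - C t₃) ^ m) :
    p ≠ 0 ∧ p.natDegree ≤ N ∧
      (X - C t₁) * (X - C t₂) * (X - C t₃) * derivative (derivative p) +
        (C γ₁ * (X - C t₂) * (X - C t₃) + C γ₂ * (X - C t₁) * (X - C t₃) +
          C γ₃ * (X - C t₁) * (X - C t₂)) * derivative p +
        (C (α * β) * (X - C t₃) - C q₀) * p = 0 := by
  subst hβ hα hp
  refine ⟨?_, ?_, ?_⟩
  · -- p ≠ 0
    intro h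
    have h1 : eval t₃ (∑ m ∈ Finset.range (N + 1), C ((c m).eval q₀) * (X - C t₃) ^ m)
        = 1 := by
      rw [eval_finset_sum, Finset.sum_eq_single 0]
      · simp [hc0]
      · intro m hm hm0
        simp [sub_self, zero_pow hm0]
      · simp
    rw [h] at h1
    simp at h1
  · -- degree bound
    apply natDegree_sum_le_of_forall_le
    intro m hm
    refine (natDegree_C_mul_le _ _).trans ?_
    rw [natDegree_pow, natDegree_X_sub_C, mul_one]
    exact Nat.lt_succ_iff.mp (Finset.mem_range.mp hm)
  · -- the Heun equation
    -- coefficient functions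
    set Af : ℕ → ℂ := fun m => ((m : ℂ) + -(N : ℂ)) *
      ((m : ℂ) + (γ₁ + γ₂ + γ₃ - 1 - -(N : ℂ))) with hAf
    set Bf : ℕ → ℂ := fun m => -((m : ℂ) *
      (((m : ℂ) - 1 + γ₃) * (t₁ + t₂ - 2 * t₃) + (t₂ - t₃) * γ₁ + (t₁ - t₃) * γ₂) + q₀) with hBf
    set Df : ℕ → ℂ := fun m => (t₁ - t₃) * (t₂ - t₃) * (m : ℂ) * ((m : ℂ) - 1 + γ₃) with hDf
    have hF0 : (c 0).eval q₀ = 1 := by simp [hc0]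
    have hF1 : (t₁ - t₃) * (t₂ - t₃) * γ₃ * (c 1).eval q₀ = q₀ := by
      have h := congrArg (eval q₀) hc1
      simpa using h
    have hFrec : ∀ m : ℕ,
        (t₁ - t₃) * (t₂ - t₃) * ((m : ℂ) + 2) * ((m : ℂ) + 1 + γ₃) * (c (m + 2)).eval q₀ =
          -(((m : ℂ) + -(N : ℂ)) * ((m : ℂ) + (γ₁ + γ₂ + γ₃ - 1 - -(N : ℂ)))) * (c m).eval q₀ +
          (((m : ℂ) + 1) * (((m : ℂ) + γ₃) * (t₁ + t₂ - 2 * t₃) +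
            (t₂ - t₃) * γ₁ + (t₁ - t₃) * γ₂) + q₀) * (c (m + 1)).eval q₀ := by
      intro m
      have h := congrArg (eval q₀) (hrec m)
      simpa using h
    have hD0 : Df 0 = 0 := by simp [hDf]
    have hrel0 : Bf 0 * (c 0).eval q₀ + Df 1 * (c 1).eval q₀ = 0 := by
      simp only [hBf, hDf]
      push_cast
      rw [hF0]
      linear_combination hF1
    have hrel : ∀ m : ℕ, Af m * (c m).eval q₀ + Bf (m + 1) * (c (m + 1)).eval q₀
        + Df (m + 2) * (c (m + 2)).eval q₀ = 0 := by
      intro m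
      simp only [hAf, hBf, hDf]
      push_cast
      linear_combination hFrec m
    -- per-monomial action of the Heun operator
    have hT : ∀ m : ℕ,
        (X - C t₁) * (X - C t₂) * (X - C t₃) * derivative (derivative ((X - C t₃) ^ m)) +
          (C γ₁ * (X - C t₂) * (X - C t₃) + C γ₂ * (X - C t₁) * (X - C t₃) +
            C γ₃ * (X - C t₁) * (X - C t₂)) * derivative ((X - C t₃) ^ m) +
          (C (-(N : ℂ) * (γ₁ + γ₂ + γ₃ - 1 - -(N : ℂ))) * (X - C t₃) - C q₀) * (X - C t₃) ^ m =
        C (Af m) * (X - C t₃) ^ (m + 1) + C (Bf m) * (X - C t₃) ^ m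
          + C (Df m) * (X - C t₃) ^ (m - 1) := by
      intro m
      match m with
      | 0 =>
          simp only [hAf, hBf, hDf, pow_zero, derivative_one, Nat.zero_sub, pow_one]
          push_cast
          simp only [map_mul, map_add, map_sub, map_neg, map_one, map_zero, map_ofNat, map_natCast, Nat.cast_ofNat, mul_zero, zero_mul]
          ring
      | 1 =>
          simp only [hAf, hBf, hDf, pow_one, derivative_X_sub_C, derivative_one]
          push_cast
          simp only [map_mul, map_add, map_sub, map_neg, map_one, map_zero, map_ofNat, map_natCast, Nat.cast_ofNat]
          ring
      | (k + 2) =>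
          have e21 : k + 2 - 1 = k + 1 := by omega
          have e11 : k + 1 - 1 = k := by omega
          rw [derivative_X_sub_C_pow, e21, derivative_C_mul, derivative_X_sub_C_pow, e11]
          simp only [hAf, hBf, hDf]
          push_cast
          simp only [map_mul, map_add, map_sub, map_neg, map_one, map_zero, map_ofNat, map_natCast, Nat.cast_ofNat]
          ring
    -- collect the operator applied to the sum
    have collect :
        (X - C t₁) * (X - C t₂) * (X - C t₃) *
            derivative (derivative (∑ m ∈ Finset.range (N + 1),
              C ((c m).eval q₀) * (X - C t₃) ^ m)) +
          (C γ₁ * (X - C t₂) * (X - C t₃) + C γ₂ * (X - C t₁) * (X - C t₃) +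
            C γ₃ * (X - C t₁) * (X - C t₂)) *
            derivative (∑ m ∈ Finset.range (N + 1), C ((c m).eval q₀) * (X - C t₃) ^ m) +
          (C (-(N : ℂ) * (γ₁ + γ₂ + γ₃ - 1 - -(N : ℂ))) * (X - C t₃) - C q₀) *
            (∑ m ∈ Finset.range (N + 1), C ((c m).eval q₀) * (X - C t₃) ^ m) =
        ∑ m ∈ Finset.range (N + 1),
          (C ((c m).eval q₀) * C (Af m) * (X - C t₃) ^ (m + 1)
            + C ((c m).eval q₀) * C (Bf m) * (X - C t₃) ^ m
            + C ((c m).eval q₀) * C (Df m) * (X - C t₃) ^ (m - 1)) := by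
      simp only [derivative_sum, derivative_C_mul]
      rw [Finset.mul_sum, Finset.mul_sum, Finset.mul_sum, ← Finset.sum_add_distrib,
        ← Finset.sum_add_distrib]
      refine Finset.sum_congr rfl fun m _ => ?_
      linear_combination C ((c m).eval q₀) * hT m
    have hsum := heun_sum_aux t₃ (fun m => (c m).eval q₀) Af Bf Df hD0 hrel0 hrel N
    have hAN : Af N = 0 := by simp only [hAf]; ring
    have hfinal : C ((c N).eval q₀) * C (Af N) * (X - C t₃) ^ (N + 1)
        - C ((c (N + 1)).eval q₀) * C (Df (N + 1)) * (X - C t₃) ^ N = 0 := by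
      rw [hAN, hq₀]
      simp
    calc _ = _ := collect
      _ = _ := hsum
      _ = 0 := hfinal
end

section
/- Let t₁, t₂, t₃ ∈ ℝ be pairwise distinct with (t₁−t₃)(t₂−t₃) < 0, let γ₁, γ₂ ∈ ℝ, and let n₀ ≥ n₃ ≥ 1 be integers. Set N = n₀ + n₃, α = −N, γ₃ = 1/2 − n₃, and assume β := γ₁ + γ₂ + γ₃ − 1 − α equals γ₃ (equivalently γ₁ + γ₂ = 1 − N). Define the polynomials c_m(q) ∈ ℝ[q] by c₀ = 1, (t₁−t₃)(t₂−t₃)γ₃·c₁ = q·c₀, and for m ≥ 1, (t₁−t₃)(t₂−t₃)(m+1)(m+γ₃)·c_{m+1} = −(m−1+α)(m−1+β)·c_{m−1} + [ m·( (m−1+γ₃)(t₁+t₂−2t₃) + (t₂−t₃)γ₁ + (t₁−t₃)γ₂ ) + q ]·c_m. Then c_{N+1} is a real polynomial of degree N+1 all of whose roots are real and pairwise distinct. -/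
open Polynomial Filter

/-!
Rescaling `c m` by the nonzero constant `∏_{k<m} (t₁-t₃)(t₂-t₃)(k+1)(k+γ₃)` turns the Heun
recursion into a monic three-term recurrence `p (m+2) = (X - a) p (m+1) - b_m p m`, and `β = γ₃`
makes `b_m = (N - m)(m + 1)(m + γ₃)² · (-(t₁-t₃)(t₂-t₃))`, positive for `m < N`. As for orthogonal
polynomials, positivity of the `b_m` makes the roots of consecutive `p m` real, simple and
interlacing: at the roots of `p (m+1)` the polynomial `p (m+2)` has the sign of `-p m`, which
alternates, so the intermediate value theorem, together with the signs of `p (m+2)` at `±∞`,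
locates `m + 2` distinct roots.
-/

theorem mul_neg_of_neg_one_pow_mul_pos {u v : ℝ} (e : ℕ) (hu : 0 < (-1) ^ (e + 1) * u)
    (hv : 0 < (-1) ^ e * v) : u * v < 0 := by
  rcases neg_one_pow_eq_or ℝ e with h | h <;> rw [pow_succ, h] at hu <;> rw [h] at hv <;> nlinarith

def Interlaces {n : ℕ} (r : Fin n → ℝ) (s : Fin (n + 1) → ℝ) : Prop :=
  ∀ i, s i.castSucc < r i ∧ r i < s i.succ

namespace Polynomial

theorem exists_isRoot_mem_Ioo_of_eval_mul_neg {q : ℝ[X]} {x y : ℝ} (hxy : x < y)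
    (h : q.eval x * q.eval y < 0) : ∃ z ∈ Set.Ioo x y, q.IsRoot z := by
  have hcont : ContinuousOn (q.eval ·) (Set.Icc x y) := q.continuous.continuousOn
  rcases mul_neg_iff.mp h with ⟨hx, hy⟩ | ⟨hx, hy⟩
  · exact intermediate_value_Ioo' hxy.le hcont ⟨hy, hx⟩
  · exact intermediate_value_Ioo hxy.le hcont ⟨hx, hy⟩

theorem Monic.eq_prod_X_sub_C_of_injective {R ι : Type*} [CommRing R] [IsDomain R] [Fintype ι]
    {p : R[X]} (hp : p.Monic) (hdeg : p.natDegree = Fintype.card ι) {t : ι → R}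
    (ht : Function.Injective t) (hroot : ∀ i, p.IsRoot (t i)) :
    p = ∏ i, (X - C (t i)) := by
  have hle : Finset.univ.val.map t ≤ p.roots :=
    (Multiset.le_iff_subset (Finset.univ.nodup.map ht)).2 fun x hx => by
      obtain ⟨i, -, rfl⟩ := Multiset.mem_map.1 hx
      exact (mem_roots hp.ne_zero).2 (hroot i)
  have hroots : Finset.univ.val.map t = p.roots :=
    Multiset.eq_of_le_of_card_le hle (by simpa [hdeg] using p.card_roots')
  conv_lhs =>
    rw [← prod_multiset_X_sub_C_of_monic_of_roots_card_eq hp (by simp [← hroots, hdeg])]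
  rw [← hroots, Multiset.map_map]
  rfl

theorem Monic.eventually_atTop_eval_pos {q : ℝ[X]} (hq : q.Monic) (hdeg : 0 < q.degree) :
    ∀ᶠ x in atTop, 0 < q.eval x :=
  (q.tendsto_atTop_of_leadingCoeff_nonneg hdeg (by simp [hq.leadingCoeff])).eventually_gt_atTop 0

theorem Monic.eventually_atBot_neg_one_pow_mul_eval_pos {q : ℝ[X]} (hq : q.Monic)
    (hdeg : 0 < q.degree) : ∀ᶠ x in atBot, 0 < (-1) ^ q.natDegree * q.eval x := by
  have h := hq.neg_one_pow_natDegree_mul_comp_neg_X.eventually_atTop_eval_pos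
    (by simpa [degree_mul] using hdeg)
  simpa using tendsto_neg_atBot_atTop.eventually h

theorem Monic.X_sub_C_mul_sub_C_mul {R : Type*} [CommRing R] [Nontrivial R]
    {P Q : R[X]} (hP : P.Monic) (hQ : Q.natDegree ≤ P.natDegree) (a b : R) :
    ((X - C a) * P - C b * Q).Monic ∧ ((X - C a) * P - C b * Q).natDegree = P.natDegree + 1 := by
  have hdeg : ((X - C a) * P).natDegree = P.natDegree + 1 := by
    rw [(monic_X_sub_C a).natDegree_mul hP, natDegree_X_sub_C, add_comm]
  have hlt : (C b * Q).natDegree < ((X - C a) * P).natDegree := by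
    rw [hdeg]; exact Nat.lt_succ_of_le ((natDegree_C_mul_le b Q).trans hQ)
  exact ⟨((monic_X_sub_C a).mul hP).sub_of_left (degree_lt_degree hlt),
    by rw [natDegree_sub_eq_left_of_natDegree_lt hlt, hdeg]⟩

theorem Monic.exists_eq_prod_X_sub_C_of_sign_alternating {q : ℝ[X]} (hq : q.Monic) {m : ℕ}
    (hdeg : q.natDegree = m) {x : Fin (m + 1) → ℝ} (hx : StrictMono x)
    (hsign : ∀ i : Fin (m + 1), 0 < (-1) ^ (m - i : ℕ) * q.eval (x i)) :
    ∃ t : Fin m → ℝ, StrictMono t ∧ q = ∏ i, (X - C (t i)) ∧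
      ∀ i, t i ∈ Set.Ioo (x i.castSucc) (x i.succ) := by
  have hchange (i : Fin m) : q.eval (x i.castSucc) * q.eval (x i.succ) < 0 := by
    have h := hsign i.castSucc
    rw [show m - (i.castSucc : ℕ) = m - i.succ + 1 by simp; omega] at h
    exact mul_neg_of_neg_one_pow_mul_pos _ h (hsign i.succ)
  choose t ht hroot using fun i =>
    exists_isRoot_mem_Ioo_of_eval_mul_neg (hx Fin.castSucc_lt_succ) (hchange i)
  have hmono : StrictMono t := fun i j hij =>
    calc t i < x i.succ := (ht i).2
      _ ≤ x j.castSucc := hx.monotone (Fin.succ_le_castSucc_iff.2 hij)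
      _ < t j := (ht j).1
  exact ⟨t, hmono, hq.eq_prod_X_sub_C_of_injective (by simp [hdeg]) hmono.injective hroot, ht⟩

theorem Monic.exists_eq_prod_X_sub_C_interlacing {q : ℝ[X]} (hq : q.Monic) {k : ℕ}
    (hdeg : q.natDegree = k + 2) {s : Fin (k + 1) → ℝ} (hs : StrictMono s)
    (hsign : ∀ j : Fin (k + 1), 0 < (-1) ^ (k + 1 - j : ℕ) * q.eval (s j)) :
    ∃ t : Fin (k + 2) → ℝ, StrictMono t ∧ q = ∏ i, (X - C (t i)) ∧ Interlaces s t := by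
  have hpos : 0 < q.degree := by
    rw [degree_eq_natDegree hq.ne_zero, hdeg]
    exact_mod_cast (k + 1).succ_pos
  obtain ⟨L, hL, hLs⟩ :=
    ((hq.eventually_atBot_neg_one_pow_mul_eval_pos hpos).and (eventually_lt_atBot (s 0))).exists
  obtain ⟨R, hR, hRs⟩ :=
    ((hq.eventually_atTop_eval_pos hpos).and (eventually_gt_atTop (s (Fin.last k)))).exists
  let x : Fin (k + 3) → ℝ := Fin.cons L (Fin.snoc s R)
  have hx : StrictMono x := by
    have h := Fin.strictMono_insertNth_last hs R hRs
    rw [Fin.insertNth_last'] at h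
    simpa [Fin.insertNth_zero'] using Fin.strictMono_insertNth_zero h L (by simpa using hLs)
  have hxsign (i : Fin (k + 3)) : 0 < (-1) ^ (k + 2 - i : ℕ) * q.eval (x i) := by
    induction i using Fin.cases with
    | zero => simpa [x, hdeg] using hL
    | succ i =>
      induction i using Fin.lastCases with
      | last => simpa [x] using hR
      | cast j => simpa [x] using hsign j
  obtain ⟨t, ht, hqt, hloc⟩ := hq.exists_eq_prod_X_sub_C_of_sign_alternating hdeg hx hxsign
  refine ⟨t, ht, hqt, fun i => ⟨?_, ?_⟩⟩
  · simpa [x] using (hloc i.castSucc).2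
  · simpa [x] using (hloc i.succ).1

end Polynomial

theorem Interlaces.neg_one_pow_mul_prod_sub_pos {n : ℕ} {r : Fin n → ℝ} {s : Fin (n + 1) → ℝ}
    (h : Interlaces r s) (hs : StrictMono s) (j : Fin (n + 1)) :
    0 < (-1) ^ (n - j : ℕ) * ∏ i, (s j - r i) := by
  have hcard : (Finset.univ.filter fun i : Fin n => ¬ (i : ℕ) < j).card = n - j := by
    have := Finset.card_filter_add_card_filter_not (s := Finset.univ) fun i : Fin n => (i : ℕ) < j
    rw [Fin.card_filter_val_lt, Finset.card_univ, Fintype.card_fin] at this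
    omega
  have hsign : (-1 : ℝ) ^ (n - j : ℕ) = ∏ i : Fin n, if (i : ℕ) < j then 1 else -1 := by
    rw [Finset.prod_ite, Finset.prod_const_one, one_mul, Finset.prod_const, hcard]
  rw [hsign, ← Finset.prod_mul_distrib]
  refine Finset.prod_pos fun i _ => ?_
  split_ifs with hij
  · have := hs.monotone (show i.succ ≤ j from Fin.le_def.2 (by simpa using hij))
    linarith [(h i).2]
  · have := hs.monotone (show j ≤ i.castSucc from Fin.le_def.2 (by simpa using hij))
    linarith [(h i).1]

theorem exists_interlacing_of_three_term_recurrence (a b : ℕ → ℝ) (p : ℕ → ℝ[X])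
    (hp0 : p 0 = 1) (hp1 : p 1 = X - C (a 0))
    (hrec : ∀ m, p (m + 2) = (X - C (a (m + 1))) * p (m + 1) - C (b m) * p m) (n : ℕ)
    (hb : ∀ m < n, 0 < b m) :
    ∃ (r : Fin n → ℝ) (s : Fin (n + 1) → ℝ), StrictMono s ∧ p n = ∏ i, (X - C (r i)) ∧
      p (n + 1) = ∏ i, (X - C (s i)) ∧ Interlaces r s := by
  induction n with
  | zero =>
    exact ⟨Fin.elim0, fun _ => a 0, Fin.strictMono_iff_lt_succ.2 Fin.elim0, by simp [hp0],
      by simp [hp1], nofun⟩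
  | succ n ih =>
    obtain ⟨r, s, hs, hpr, hps, hrs⟩ := ih fun m hm => hb m (by omega)
    obtain ⟨hmonic, hdeg⟩ := (hps ▸ monic_prod_X_sub_C s Finset.univ).X_sub_C_mul_sub_C_mul
      (Q := p n) (by simp [hpr, hps]) (a (n + 1)) (b n)
    rw [← hrec] at hmonic hdeg
    have hsign (j : Fin (n + 1)) : 0 < (-1) ^ (n + 1 - j : ℕ) * (p (n + 2)).eval (s j) := by
      have hroot : (p (n + 1)).eval (s j) = 0 := by
        rw [hps, eval_prod]; exact Finset.prod_eq_zero (Finset.mem_univ j) (by simp)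
      have := hrs.neg_one_pow_mul_prod_sub_pos hs j
      rw [hrec, show n + 1 - (j : ℕ) = n - j + 1 by omega, pow_succ]
      simp only [eval_sub, eval_mul, hroot, mul_zero, zero_sub, eval_C, hpr, eval_prod, eval_X]
      nlinarith [hb n n.lt_succ_self]
    obtain ⟨t, ht, hpt, hst⟩ :=
      hmonic.exists_eq_prod_X_sub_C_interlacing (by simpa [hps] using hdeg) hs hsign
    exact ⟨s, t, ht, hps, hpt, hst⟩

theorem exists_eq_C_mul_prod_X_sub_C_of_recurrence (c : ℕ → ℝ[X]) (d e f : ℕ → ℝ)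
    (hd : ∀ m, d m ≠ 0) (hc0 : c 0 = 1) (hc1 : C (d 0) * c 1 = C (e 0) + X)
    (hrec : ∀ m, C (d (m + 1)) * c (m + 2) = C (f m) * c m + (C (e (m + 1)) + X) * c (m + 1))
    (n : ℕ) (hfd : ∀ m < n, f m * d m < 0) :
    ∃ (κ : ℝ) (s : Fin (n + 1) → ℝ), κ ≠ 0 ∧ StrictMono s ∧
      c (n + 1) = C κ * ∏ i, (X - C (s i)) := by
  set μ : ℕ → ℝ := fun m => ∏ k ∈ Finset.range m, d k
  have hμ (m : ℕ) : μ m ≠ 0 := Finset.prod_ne_zero_iff.2 fun k _ => hd k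
  have hμ_succ (m : ℕ) : μ (m + 1) = μ m * d m := Finset.prod_range_succ _ _
  have hp1 : C (μ 1) * c 1 = X - C (-e 0) := by
    rw [hμ_succ, show μ 0 = 1 from Finset.prod_range_zero _, one_mul, hc1, map_neg,
      sub_neg_eq_add, add_comm]
  have hprec (m : ℕ) : C (μ (m + 2)) * c (m + 2) =
      (X - C (-e (m + 1))) * (C (μ (m + 1)) * c (m + 1)) -
        C (-(f m * d m)) * (C (μ m) * c m) := by
    calc C (μ (m + 2)) * c (m + 2) = C (μ (m + 1)) * (C (d (m + 1)) * c (m + 2)) := by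
          rw [hμ_succ (m + 1), C_mul, mul_assoc]
      _ = _ := by
          rw [hrec, hμ_succ m]
          simp only [map_neg, map_mul]
          ring
  obtain ⟨-, s, hs, -, hps, -⟩ := exists_interlacing_of_three_term_recurrence (fun m => -e m)
    (fun m => -(f m * d m)) (fun m => C (μ m) * c m) (by simp [μ, hc0]) hp1 hprec n
    fun m hm => neg_pos.2 (hfd m hm)
  refine ⟨(μ (n + 1))⁻¹, s, inv_ne_zero (hμ _), hs, ?_⟩
  rw [← hps, ← mul_assoc, ← C_mul, inv_mul_cancel₀ (hμ _), C_1, one_mul]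

theorem heun_recursion_real_distinct_roots_general
    (t₁ t₂ t₃ γ₁ γ₂ γ₃ α β : ℝ) (n₃ N : ℕ)
    (hsign : (t₁ - t₃) * (t₂ - t₃) < 0)
    (hα : α = -(N : ℝ)) (hγ₃ : γ₃ = 1 / 2 - (n₃ : ℝ))
    (hββ : β = γ₃)
    (c : ℕ → Polynomial ℝ)
    (hc0 : c 0 = 1)
    (hc1 : C ((t₁ - t₃) * (t₂ - t₃) * γ₃) * c 1 = X)
    (hrec : ∀ m : ℕ,
      C ((t₁ - t₃) * (t₂ - t₃) * ((m : ℝ) + 2) * ((m : ℝ) + 1 + γ₃)) * c (m + 2) =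
        C (-(((m : ℝ) + α) * ((m : ℝ) + β))) * c m +
        (C (((m : ℝ) + 1) * (((m : ℝ) + γ₃) * (t₁ + t₂ - 2 * t₃) +
            (t₂ - t₃) * γ₁ + (t₁ - t₃) * γ₂)) + X) * c (m + 1)) :
    ∃ (a : ℝ) (s : Fin (N + 1) → ℝ), a ≠ 0 ∧ StrictMono s ∧
      c (N + 1) = C a * ∏ i : Fin (N + 1), (X - C (s i)) := by
  have hγ₃ne (m : ℕ) : (m : ℝ) + γ₃ ≠ 0 := by
    rw [hγ₃]
    intro h
    have : 2 * m + 1 = 2 * n₃ := by exact_mod_cast (show (2 * m + 1 : ℝ) = 2 * n₃ by linarith)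
    omega
  apply exists_eq_C_mul_prod_X_sub_C_of_recurrence c
    (fun m => (t₁ - t₃) * (t₂ - t₃) * ((m : ℝ) + 1) * ((m : ℝ) + γ₃))
    (fun m => (m : ℝ) *
      (((m : ℝ) - 1 + γ₃) * (t₁ + t₂ - 2 * t₃) + (t₂ - t₃) * γ₁ + (t₁ - t₃) * γ₂))
    (fun m => -(((m : ℝ) + α) * ((m : ℝ) + β)))
  · exact fun m => mul_ne_zero (mul_ne_zero hsign.ne (by positivity)) (hγ₃ne m)
  · exact hc0
  · simpa using hc1
  · intro m
    convert hrec m using 5 <;> push_cast <;> ring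
  · intro m hm
    have hmN : (m : ℝ) < N := by exact_mod_cast hm
    have hfd_eq : -(((m : ℝ) + α) * ((m : ℝ) + β)) *
        ((t₁ - t₃) * (t₂ - t₃) * ((m : ℝ) + 1) * ((m : ℝ) + γ₃)) =
        ((N - m) * (m + 1) * ((m : ℝ) + γ₃) ^ 2) * ((t₁ - t₃) * (t₂ - t₃)) := by
      rw [hα, hββ]; ring
    rw [hfd_eq]
    exact mul_neg_of_pos_of_neg (mul_pos (mul_pos (sub_pos.2 hmN) m.cast_add_one_pos)
      (sq_pos_of_ne_zero (hγ₃ne m))) hsign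

/-- **Real distinct roots for the Heun recursion with `β = γ₃ = 1/2 - n₃ < 0`.**
With real data `t₁, t₂, t₃` pairwise distinct, `(t₁-t₃)(t₂-t₃) < 0`, integers
`n₀ ≥ n₃ ≥ 1`, `N = n₀ + n₃`, `α = -N`, `γ₃ = β = 1/2 - n₃`, the polynomial
`c_{N+1}` produced by the Heun recursion has degree `N+1` and all its roots are
real and pairwise distinct. -/
theorem heun_recursion_real_distinct_roots
    (t₁ t₂ t₃ γ₁ γ₂ γ₃ α β : ℝ) (n₀ n₃ N : ℕ)
    (hn₃ : 1 ≤ n₃) (hn₀ : n₃ ≤ n₀) (hN : N = n₀ + n₃)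
    (ht12 : t₁ ≠ t₂) (ht23 : t₂ ≠ t₃) (ht13 : t₁ ≠ t₃)
    (hsign : (t₁ - t₃) * (t₂ - t₃) < 0)
    (hα : α = -(N : ℝ)) (hγ₃ : γ₃ = 1 / 2 - (n₃ : ℝ))
    (hβ : β = γ₁ + γ₂ + γ₃ - 1 - α) (hββ : β = γ₃)
    (c : ℕ → Polynomial ℝ)
    (hc0 : c 0 = 1)
    (hc1 : C ((t₁ - t₃) * (t₂ - t₃) * γ₃) * c 1 = X)
    (hrec : ∀ m : ℕ,
      C ((t₁ - t₃) * (t₂ - t₃) * ((m : ℝ) + 2) * ((m : ℝ) + 1 + γ₃)) * c (m + 2) =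
        C (-(((m : ℝ) + α) * ((m : ℝ) + β))) * c m +
        (C (((m : ℝ) + 1) * (((m : ℝ) + γ₃) * (t₁ + t₂ - 2 * t₃) +
            (t₂ - t₃) * γ₁ + (t₁ - t₃) * γ₂)) + X) * c (m + 1)) :
    ∃ (a : ℝ) (s : Fin (N + 1) → ℝ), a ≠ 0 ∧ StrictMono s ∧
      c (N + 1) = C a * ∏ i : Fin (N + 1), (X - C (s i)) :=
  heun_recursion_real_distinct_roots_general t₁ t₂ t₃ γ₁ γ₂ γ₃ α β n₃ N hsign hα hγ₃ hββ c hc0 hc1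
    hrec
end
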